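/- Let 0 < α < 1 and r > 0, and suppose β_r ∈ (0,1) satisfies B_α(1−β_r)/B_α(β_r) = √r, where B_α(x) = √(∫₀^x (t−t²)^(α−1) dt). Then B_α(β_r)² = Γ(α)²/(Γ(2α)(r+1)), i.e. ∫₀^{β_r} (t−t²)^(α−1) dt = Γ(α)²/((r+1)Γ(2α)). -/

import Mathlib

open Real MeasureTheory intervalIntegral

/-! The integrand `(t - t²)^(α-1)` is invariant under `t ↦ 1 - t`, so `B_α(1-β)² = ∫_β^1`.
The hypothesis makes this `r` times `B_α(β)² = ∫_0^β`, and the two integrals add up to the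
Beta integral `B(α, α) = Γ(α)² / Γ(2α)`. -/

/-- `B_α(x) = √(∫₀ˣ (t - t²)^(α-1) dt)`. -/
noncomputable def Balpha (α x : ℝ) : ℝ :=
  Real.sqrt (∫ t in (0:ℝ)..x, (t - t ^ 2) ^ (α - 1))

lemma ofReal_rpow_mul_one_sub_rpow {t : ℝ} (ht : t ∈ Set.Icc (0:ℝ) 1) (u v : ℝ) :
    ((t ^ (u - 1) * (1 - t) ^ (v - 1) : ℝ) : ℂ) =
      (t : ℂ) ^ ((u : ℂ) - 1) * (1 - (t : ℂ)) ^ ((v : ℂ) - 1) := by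
  rw [Complex.ofReal_mul, Complex.ofReal_cpow ht.1, Complex.ofReal_cpow (sub_nonneg.2 ht.2)]
  push_cast
  rfl

lemma intervalIntegrable_rpow_mul_one_sub_rpow {u v : ℝ} (hu : 0 < u) (hv : 0 < v) :
    IntervalIntegrable (fun t : ℝ => t ^ (u - 1) * (1 - t) ^ (v - 1)) volume 0 1 := by
  have hc := Complex.betaIntegral_convergent (u := u) (v := v) (by simpa) (by simpa)
  rw [intervalIntegrable_iff_integrableOn_Ioc_of_le zero_le_one] at hc ⊢
  refine IntegrableOn.congr_fun hc.re (fun t ht => ?_) measurableSet_Ioc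
  simp [← ofReal_rpow_mul_one_sub_rpow (Set.Ioc_subset_Icc_self ht)]

theorem integral_rpow_mul_one_sub_rpow {u v : ℝ} (hu : 0 < u) (hv : 0 < v) :
    ∫ t in (0:ℝ)..1, t ^ (u - 1) * (1 - t) ^ (v - 1) = Gamma u * Gamma v / Gamma (u + v) := by
  apply Complex.ofReal_injective
  rw [← integral_ofReal, integral_congr fun t ht =>
    ofReal_rpow_mul_one_sub_rpow (Set.uIcc_of_le (zero_le_one' ℝ) ▸ ht) u v]
  have := Complex.betaIntegral_eq_Gamma_mul_div u v (by simpa) (by simpa)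
  push_cast [← Complex.Gamma_ofReal]
  exact this

lemma sub_sq_rpow {t : ℝ} (ht : t ∈ Set.Icc (0:ℝ) 1) (a : ℝ) :
    (t - t ^ 2) ^ a = t ^ a * (1 - t) ^ a := by
  rw [← Real.mul_rpow ht.1 (sub_nonneg.2 ht.2)]
  ring_nf

lemma intervalIntegrable_sub_sq_rpow {α : ℝ} (hα : 0 < α) :
    IntervalIntegrable (fun t : ℝ => (t - t ^ 2) ^ (α - 1)) volume 0 1 := by
  refine (intervalIntegrable_rpow_mul_one_sub_rpow hα hα).congr fun t ht => ?_
  rw [Set.uIoc_of_le zero_le_one] at ht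
  exact (sub_sq_rpow (Set.Ioc_subset_Icc_self ht) _).symm

lemma integral_sub_sq_rpow {α : ℝ} (hα : 0 < α) :
    ∫ t in (0:ℝ)..1, (t - t ^ 2) ^ (α - 1) = Gamma α ^ 2 / Gamma (2 * α) := by
  rw [integral_congr fun t ht => sub_sq_rpow (Set.uIcc_of_le (zero_le_one' ℝ) ▸ ht) _,
    integral_rpow_mul_one_sub_rpow hα hα, two_mul, sq]

lemma integral_zero_one_sub_eq_of_symm {f : ℝ → ℝ} (hf : ∀ t, f (1 - t) = f t) (b : ℝ) :
    ∫ t in (0:ℝ)..(1 - b), f t = ∫ t in b..1, f t := by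
  simpa [hf] using integral_comp_sub_left f 1 (a := 0) (b := 1 - b)

lemma eq_mul_of_sqrt_div_sqrt_eq_sqrt {a b r : ℝ} (ha : 0 ≤ a) (hb : 0 < b) (hr : 0 ≤ r)
    (h : √a / √b = √r) : a = r * b := by
  rw [← Real.sqrt_div' a hb.le, Real.sqrt_inj (div_nonneg ha hb.le) hr] at h
  rwa [div_eq_iff hb.ne'] at h

theorem stmt7_general (α r β : ℝ) (hα : 0 < α) (hr : 0 < r)
    (hβ : β ∈ Set.Ioo (0:ℝ) 1)
    (h : Balpha α (1 - β) / Balpha α β = Real.sqrt r) :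
    (∫ t in (0:ℝ)..β, (t - t ^ 2) ^ (α - 1)) =
      Real.Gamma α ^ 2 / ((r + 1) * Real.Gamma (2 * α)) := by
  set f : ℝ → ℝ := fun t => (t - t ^ 2) ^ (α - 1)
  have hf := intervalIntegrable_sub_sq_rpow hα
  have hβ01 : β ∈ Set.uIcc 0 1 := Set.mem_uIcc_of_le hβ.1.le hβ.2.le
  have hf0β : IntervalIntegrable f volume 0 β :=
    hf.mono_set (Set.uIcc_subset_uIcc Set.left_mem_uIcc hβ01)
  have hfβ1 : IntervalIntegrable f volume β 1 :=
    hf.mono_set (Set.uIcc_subset_uIcc hβ01 Set.right_mem_uIcc)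
  have hB : 0 < ∫ t in (0:ℝ)..β, f t := intervalIntegral_pos_of_pos_on hf0β
    (fun t ht => rpow_pos_of_pos (by nlinarith [ht.1, ht.2, hβ.2]) _) hβ.1
  have hA : 0 ≤ ∫ t in (0:ℝ)..(1 - β), f t := integral_nonneg (by linarith [hβ.2])
    fun t ht => rpow_nonneg (by nlinarith [ht.1, ht.2, hβ.1]) _
  have hratio := eq_mul_of_sqrt_div_sqrt_eq_sqrt hA hB hr.le h
  rw [integral_zero_one_sub_eq_of_symm (fun t => by simp only [f]; ring_nf) β] at hratio
  have hsplit := integral_add_adjacent_intervals hf0β hfβ1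
  rw [integral_sub_sq_rpow hα, hratio] at hsplit
  rw [mul_comm (r + 1), ← div_div, ← hsplit]
  field_simp
  ring

theorem stmt7 (α r β : ℝ) (hα : 0 < α) (hα1 : α < 1) (hr : 0 < r)
    (hβ : β ∈ Set.Ioo (0:ℝ) 1)
    (h : Balpha α (1 - β) / Balpha α β = Real.sqrt r) :
    (∫ t in (0:ℝ)..β, (t - t ^ 2) ^ (α - 1)) =
      Real.Gamma α ^ 2 / ((r + 1) * Real.Gamma (2 * α)) :=
  stmt7_general α r β hα hr hβ h
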